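/- arXiv:2109.12831 — 14 statements merged into one kernel-verified Lean document; each statement's English description precedes it below -/
import Mathlib

section
/- Let (X,P,θ) and (Y,S,ρ) be semigroup actions of monoids on topological spaces, with (Y,S,ρ) essentially free (for all distinct s,t ∈ S, the set {y : ρ_s(y) = ρ_t(y)} has empty interior). Suppose φ : X → Y is a homeomorphism and a, a' : P × X → S are continuous maps (X carrying its topology, P discrete) such that φ(θ_m(x)) = ρ_{a(m,x)}(φ(x)) and φ(θ_m(x)) = ρ_{a'(m,x)}(φ(x)) for all m ∈ P, x ∈ X. Then a = a'. -/
/-- If `(Y,S,ρ)` is essentially free, then the continuous orbit cocycle `a`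
in `φ (θ m x) = ρ (a m x) (φ x)` is uniquely determined. -/
theorem cocycle_unique
    {X Y P S : Type*} [TopologicalSpace X] [TopologicalSpace Y]
    [Monoid P] [Monoid S]
    (θ : P → X → X) (ρ : S → Y → Y)
    (hθid : θ 1 = id) (hθcomp : ∀ n m : P, θ n ∘ θ m = θ (m * n))
    (hρid : ρ 1 = id) (hρcomp : ∀ s t : S, ρ s ∘ ρ t = ρ (t * s))
    (hEF : ∀ s t : S, s ≠ t → interior {y : Y | ρ s y = ρ t y} = ∅)
    (φ : X ≃ₜ Y) (a a' : P → X → S)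
    (ha : ∀ m : P, IsLocallyConstant (a m)) (ha' : ∀ m : P, IsLocallyConstant (a' m))
    (heq : ∀ (m : P) (x : X), φ (θ m x) = ρ (a m x) (φ x))
    (heq' : ∀ (m : P) (x : X), φ (θ m x) = ρ (a' m x) (φ x)) :
    a = a' := by
  funext m x
  by_contra hne
  set s := a m x
  set t := a' m x
  have hU : IsOpen ((a m) ⁻¹' {s} ∩ (a' m) ⁻¹' {t}) :=
    ((ha m).isOpen_fiber s).inter ((ha' m).isOpen_fiber t)
  have hsub : φ '' ((a m) ⁻¹' {s} ∩ (a' m) ⁻¹' {t}) ⊆ {y : Y | ρ s y = ρ t y} := by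
    rintro y ⟨z, ⟨hz1, hz2⟩, rfl⟩
    simp only [Set.mem_preimage, Set.mem_singleton_iff] at hz1 hz2
    show ρ s (φ z) = ρ t (φ z)
    rw [← hz1, ← hz2, ← heq m z, ← heq' m z]
  have hopen : IsOpen (φ '' ((a m) ⁻¹' {s} ∩ (a' m) ⁻¹' {t})) := φ.isOpenMap _ hU
  have : φ x ∈ interior {y : Y | ρ s y = ρ t y} :=
    interior_maximal hsub hopen ⟨x, ⟨rfl, rfl⟩, rfl⟩
  rw [hEF s t hne] at this
  exact this
end

section
/- Let (X,P,θ) and (Y,S,ρ) be essentially free semigroup actions of monoids on compact Hausdorff spaces without isolated points, continuously one-sided orbit equivalent via a homeomorphism φ : X → Y and continuous maps a : P × X → S, b : S × Y → P satisfying φ(θ_m(x)) = ρ_{a(m,x)}(φ(x)) and φ⁻¹(ρ_s(y)) = θ_{b(s,y)}(φ⁻¹(y)). Then a satisfies the cocycle identity a(nm, x) = a(n,x) · a(m, θ_n(x)) for all n, m ∈ P and x ∈ X. -/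
theorem csoe_cocycle_identity
    {X Y P S : Type*} [TopologicalSpace X] [TopologicalSpace Y]
    [CompactSpace X] [T2Space X] [CompactSpace Y] [T2Space Y]
    [Monoid P] [Monoid S]
    (θ : P → X → X) (ρ : S → Y → Y)
    (hθid : θ 1 = id) (hθcomp : ∀ n m : P, θ n ∘ θ m = θ (m * n))
    (hρid : ρ 1 = id) (hρcomp : ∀ s t : S, ρ s ∘ ρ t = ρ (t * s))
    (hθloc : ∀ m : P, IsLocalHomeomorph (θ m)) (hθsurj : ∀ m : P, Function.Surjective (θ m))
    (hρloc : ∀ s : S, IsLocalHomeomorph (ρ s)) (hρsurj : ∀ s : S, Function.Surjective (ρ s))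
    (hXiso : ∀ x : X, ¬ IsOpen ({x} : Set X)) (hYiso : ∀ y : Y, ¬ IsOpen ({y} : Set Y))
    (hEFX : ∀ m n : P, m ≠ n → interior {x : X | θ m x = θ n x} = ∅)
    (hEFY : ∀ s t : S, s ≠ t → interior {y : Y | ρ s y = ρ t y} = ∅)
    (φ : X ≃ₜ Y) (a : P → X → S) (b : S → Y → P)
    (ha : ∀ m : P, IsLocallyConstant (a m)) (hb : ∀ s : S, IsLocallyConstant (b s))
    (haeq : ∀ (m : P) (x : X), φ (θ m x) = ρ (a m x) (φ x))
    (hbeq : ∀ (s : S) (y : Y), φ.symm (ρ s y) = θ (b s y) (φ.symm y)) :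
    ∀ (n m : P) (x : X), a (n * m) x = a n x * a m (θ n x) := by
  intro n m x
  by_contra hne
  set s := a (n * m) x with hs
  set t := a n x * a m (θ n x) with ht
  have hθncont : Continuous (θ n) := (hθloc n).continuous
  set U : Set X := (a (n * m)) ⁻¹' {s} ∩ (a n) ⁻¹' {a n x} ∩ (a m ∘ θ n) ⁻¹' {a m (θ n x)}
    with hU
  have hUopen : IsOpen U := by
    refine (((ha (n * m)).isOpen_fiber _).inter ((ha n).isOpen_fiber _)).inter ?_
    exact ((ha m).comp_continuous hθncont).isOpen_fiber _
  have hxU : x ∈ U := ⟨⟨rfl, rfl⟩, rfl⟩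
  have hsub : φ '' U ⊆ {y : Y | ρ s y = ρ t y} := by
    rintro y ⟨x', hx', rfl⟩
    obtain ⟨⟨h1, h2⟩, h3⟩ := hx'
    simp only [Set.mem_preimage, Set.mem_singleton_iff, Function.comp_apply] at h1 h2 h3
    show ρ s (φ x') = ρ t (φ x')
    calc ρ s (φ x') = ρ (a (n * m) x') (φ x') := by rw [h1]
      _ = φ (θ (n * m) x') := (haeq (n * m) x').symm
      _ = φ (θ m (θ n x')) := by rw [← hθcomp m n]; rfl
      _ = ρ (a m (θ n x')) (φ (θ n x')) := haeq m (θ n x')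
      _ = ρ (a m (θ n x')) (ρ (a n x') (φ x')) := by rw [haeq n x']
      _ = ρ (a n x' * a m (θ n x')) (φ x') := congrFun (hρcomp _ _) _
      _ = ρ t (φ x') := by rw [h2, h3]
  have hopen : IsOpen (φ '' U) := φ.isOpenMap U hUopen
  have : φ x ∈ interior {y : Y | ρ s y = ρ t y} :=
    (IsOpen.subset_interior_iff hopen).2 hsub ⟨x, hxU, rfl⟩
  rw [hEFY s t hne] at this
  exact this
end

section
/- In the setting of a continuous one-sided orbit equivalence between essentially free semigroup actions (X,P,θ) and (Y,S,ρ), with maps φ, a, b as above, one has b(a(m,x), φ(x)) = m for all m ∈ P, x ∈ X, and a(b(s,y), φ⁻¹(y)) = s for all s ∈ S, y ∈ Y. -/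
theorem csoe_cocycles_inverse
    {X Y P S : Type*} [TopologicalSpace X] [TopologicalSpace Y]
    [CompactSpace X] [T2Space X] [CompactSpace Y] [T2Space Y]
    [Monoid P] [Monoid S]
    (θ : P → X → X) (ρ : S → Y → Y)
    (hθid : θ 1 = id) (hθcomp : ∀ n m : P, θ n ∘ θ m = θ (m * n))
    (hρid : ρ 1 = id) (hρcomp : ∀ s t : S, ρ s ∘ ρ t = ρ (t * s))
    (hθloc : ∀ m : P, IsLocalHomeomorph (θ m)) (hθsurj : ∀ m : P, Function.Surjective (θ m))
    (hρloc : ∀ s : S, IsLocalHomeomorph (ρ s)) (hρsurj : ∀ s : S, Function.Surjective (ρ s))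
    (hXiso : ∀ x : X, ¬ IsOpen ({x} : Set X)) (hYiso : ∀ y : Y, ¬ IsOpen ({y} : Set Y))
    (hEFX : ∀ m n : P, m ≠ n → interior {x : X | θ m x = θ n x} = ∅)
    (hEFY : ∀ s t : S, s ≠ t → interior {y : Y | ρ s y = ρ t y} = ∅)
    (φ : X ≃ₜ Y) (a : P → X → S) (b : S → Y → P)
    (ha : ∀ m : P, IsLocallyConstant (a m)) (hb : ∀ s : S, IsLocallyConstant (b s))
    (haeq : ∀ (m : P) (x : X), φ (θ m x) = ρ (a m x) (φ x))
    (hbeq : ∀ (s : S) (y : Y), φ.symm (ρ s y) = θ (b s y) (φ.symm y)) :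
    (∀ (m : P) (x : X), b (a m x) (φ x) = m) ∧
    (∀ (s : S) (y : Y), a (b s (y)) (φ.symm y) = s) := by
  constructor
  · intro m x₀
    by_contra hne
    set s := a m x₀ with hs
    set n := b s (φ x₀) with hn
    have key : ∀ x : X, θ (b (a m x) (φ x)) x = θ m x := by
      intro x
      have h1 := hbeq (a m x) (φ x)
      rw [φ.symm_apply_apply, ← haeq m x, φ.symm_apply_apply] at h1
      exact h1.symm
    have hU1 : IsOpen {x : X | a m x = s} := (ha m).isOpen_fiber s
    have hU2 : IsOpen {x : X | b s (φ x) = n} :=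
      ((hb s).comp_continuous φ.continuous).isOpen_fiber n
    have hsub : {x : X | a m x = s} ∩ {x : X | b s (φ x) = n} ⊆ {x : X | θ n x = θ m x} := by
      rintro x ⟨h1, h2⟩
      have hk := key x
      rw [h1, h2] at hk
      exact hk
    have hmem : x₀ ∈ interior {x : X | θ n x = θ m x} := by
      rw [mem_interior]
      exact ⟨_, hsub, hU1.inter hU2, ⟨rfl, rfl⟩⟩
    rw [hEFX n m hne] at hmem
    exact hmem
  · intro t y₀
    by_contra hne
    set m := b t y₀ with hm
    set n := a m (φ.symm y₀) with hn
    have key : ∀ y : Y, ρ (a (b t y) (φ.symm y)) y = ρ t y := by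
      intro y
      have h1 := haeq (b t y) (φ.symm y)
      rw [φ.apply_symm_apply, ← hbeq t y, φ.apply_symm_apply] at h1
      exact h1.symm
    have hU1 : IsOpen {y : Y | b t y = m} := (hb t).isOpen_fiber m
    have hU2 : IsOpen {y : Y | a m (φ.symm y) = n} :=
      ((ha m).comp_continuous φ.symm.continuous).isOpen_fiber n
    have hsub : {y : Y | b t y = m} ∩ {y : Y | a m (φ.symm y) = n} ⊆ {y : Y | ρ n y = ρ t y} := by
      rintro y ⟨h1, h2⟩
      have hk := key y
      rw [h1, h2] at hk
      exact hk
    have hmem : y₀ ∈ interior {y : Y | ρ n y = ρ t y} := by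
      rw [mem_interior]
      exact ⟨_, hsub, hU1.inter hU2, ⟨rfl, rfl⟩⟩
    rw [hEFY n t hne] at hmem
    exact hmem
end

section
/- In the setting of a continuous one-sided orbit equivalence between essentially free semigroup actions (X,P,θ) and (Y,S,ρ) via φ, a, b, for every x ∈ X the map a_x : P → S, m ↦ a(m,x) is a bijection with inverse s ↦ b(s, φ(x)), and a_x(e) = e. -/
theorem csoe_cocycle_bijective
    {X Y P S : Type*} [TopologicalSpace X] [TopologicalSpace Y]
    [CompactSpace X] [T2Space X] [CompactSpace Y] [T2Space Y]
    [Monoid P] [Monoid S]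
    (θ : P → X → X) (ρ : S → Y → Y)
    (hθid : θ 1 = id) (hθcomp : ∀ n m : P, θ n ∘ θ m = θ (m * n))
    (hρid : ρ 1 = id) (hρcomp : ∀ s t : S, ρ s ∘ ρ t = ρ (t * s))
    (hθloc : ∀ m : P, IsLocalHomeomorph (θ m)) (hθsurj : ∀ m : P, Function.Surjective (θ m))
    (hρloc : ∀ s : S, IsLocalHomeomorph (ρ s)) (hρsurj : ∀ s : S, Function.Surjective (ρ s))
    (hXiso : ∀ x : X, ¬ IsOpen ({x} : Set X)) (hYiso : ∀ y : Y, ¬ IsOpen ({y} : Set Y))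
    (hEFX : ∀ m n : P, m ≠ n → interior {x : X | θ m x = θ n x} = ∅)
    (hEFY : ∀ s t : S, s ≠ t → interior {y : Y | ρ s y = ρ t y} = ∅)
    (φ : X ≃ₜ Y) (a : P → X → S) (b : S → Y → P)
    (ha : ∀ m : P, IsLocallyConstant (a m)) (hb : ∀ s : S, IsLocallyConstant (b s))
    (haeq : ∀ (m : P) (x : X), φ (θ m x) = ρ (a m x) (φ x))
    (hbeq : ∀ (s : S) (y : Y), φ.symm (ρ s y) = θ (b s y) (φ.symm y)) :
    ∀ x : X,
      Function.Bijective (fun m : P => a m x) ∧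
      Function.LeftInverse (fun s : S => b s (φ x)) (fun m : P => a m x) ∧
      Function.RightInverse (fun s : S => b s (φ x)) (fun m : P => a m x) ∧
      a 1 x = 1 := by
  intro x
  -- Left inverse : b (a m x) (φ x) = m
  have hleft : ∀ m : P, b (a m x) (φ x) = m := by
    intro m
    by_contra hne
    set U : Set X :=
      (a m ⁻¹' {a m x}) ∩ (φ ⁻¹' (b (a m x) ⁻¹' {b (a m x) (φ x)})) with hUdef
    have hUopen : IsOpen U :=
      ((ha m) {a m x}).inter (((hb (a m x)) {b (a m x) (φ x)}).preimage φ.continuous)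
    have hxU : x ∈ U := ⟨rfl, rfl⟩
    have hsub : U ⊆ {x' : X | θ (b (a m x) (φ x)) x' = θ m x'} := by
      rintro x' ⟨h1, h2⟩
      simp only [Set.mem_preimage, Set.mem_singleton_iff] at h1 h2
      have : θ (b (a m x) (φ x)) x' = φ.symm (ρ (a m x) (φ x')) := by
        rw [hbeq (a m x) (φ x'), φ.symm_apply_apply, h2]
      rw [Set.mem_setOf_eq, this, ← h1, ← haeq m x', φ.symm_apply_apply]
    have hx_int : x ∈ interior {x' : X | θ (b (a m x) (φ x)) x' = θ m x'} :=
      interior_maximal hsub hUopen hxU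
    rw [hEFX _ _ hne] at hx_int
    exact hx_int
  -- Right inverse : a (b s (φ x)) x = s
  have hright : ∀ s : S, a (b s (φ x)) x = s := by
    intro s
    by_contra hne
    set n := b s (φ x) with hn
    set V : Set Y :=
      (b s ⁻¹' {n}) ∩ (φ.symm ⁻¹' (a n ⁻¹' {a n x})) with hVdef
    have hVopen : IsOpen V :=
      ((hb s) {n}).inter (((ha n) {a n x}).preimage φ.symm.continuous)
    have hyV : φ x ∈ V := by
      refine ⟨rfl, ?_⟩
      simp only [Set.mem_preimage, φ.symm_apply_apply, Set.mem_singleton_iff]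
    have hsub : V ⊆ {y : Y | ρ (a n x) y = ρ s y} := by
      rintro y ⟨h1, h2⟩
      simp only [Set.mem_preimage, Set.mem_singleton_iff] at h1 h2
      have h3 : ρ (a n x) y = φ (θ n (φ.symm y)) := by
        rw [haeq n (φ.symm y), φ.apply_symm_apply, h2]
      rw [Set.mem_setOf_eq, h3, ← h1, ← hbeq s y, φ.apply_symm_apply]
    have hy_int : φ x ∈ interior {y : Y | ρ (a n x) y = ρ s y} :=
      interior_maximal hsub hVopen hyV
    rw [hEFY _ _ hne] at hy_int
    exact hy_int
  -- a 1 x = 1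
  have hone : a 1 x = 1 := by
    by_contra hne
    set V : Set Y := φ.symm ⁻¹' (a 1 ⁻¹' {a 1 x}) with hVdef
    have hVopen : IsOpen V := ((ha 1) {a 1 x}).preimage φ.symm.continuous
    have hyV : φ x ∈ V := by
      simp only [hVdef, Set.mem_preimage, φ.symm_apply_apply, Set.mem_singleton_iff]
    have hsub : V ⊆ {y : Y | ρ (a 1 x) y = ρ 1 y} := by
      intro y h2
      simp only [hVdef, Set.mem_preimage, Set.mem_singleton_iff] at h2
      have : ρ (a 1 x) y = φ (θ 1 (φ.symm y)) := by
        rw [haeq 1 (φ.symm y), φ.apply_symm_apply, h2]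
      rw [Set.mem_setOf_eq, this, hθid, hρid, id, id, φ.apply_symm_apply]
    have hy_int : φ x ∈ interior {y : Y | ρ (a 1 x) y = ρ 1 y} :=
      interior_maximal hsub hVopen hyV
    rw [hEFY _ _ hne] at hy_int
    exact hy_int
  have hL : Function.LeftInverse (fun s : S => b s (φ x)) (fun m : P => a m x) := hleft
  have hR : Function.RightInverse (fun s : S => b s (φ x)) (fun m : P => a m x) := hright
  exact ⟨⟨hL.injective, hR.surjective⟩, hL, hR, hone⟩
end

section
/- Two essentially free semigroup actions (X,P,θ) and (Y,S,ρ) on compact Hausdorff spaces without isolated points are continuously one-sided orbit equivalent if and only if the topological semi-groupoids P ⋉ X and S ⋉ Y are isomorphic, where P ⋉ X = P × X with product topology and partial multiplication (m,x)(n,y) = (nm, y) defined when x = θ_n(y). -/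
/-- Rigidity: if two maps of an essentially free action agree on a nonempty open set,
the acting elements coincide. -/
lemma csoe_rigid {Z G : Type*} [TopologicalSpace Z] (ρ : G → Z → Z)
    (hEF : ∀ s t : G, s ≠ t → interior {z : Z | ρ s z = ρ t z} = ∅)
    {s t : G} {U : Set Z} (hU : IsOpen U) {z : Z} (hz : z ∈ U)
    (h : ∀ z' ∈ U, ρ s z' = ρ t z') : s = t := by
  by_contra hst
  have hsub : U ⊆ interior {z : Z | ρ s z = ρ t z} :=
    hU.subset_interior_iff.mpr h
  rw [hEF s t hst] at hsub
  exact hsub hz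

theorem csoe_iff_semigroupoid_iso
    {X Y P S : Type*} [TopologicalSpace X] [TopologicalSpace Y]
    [CompactSpace X] [T2Space X] [CompactSpace Y] [T2Space Y]
    [Monoid P] [Monoid S]
    [TopologicalSpace P] [DiscreteTopology P] [TopologicalSpace S] [DiscreteTopology S]
    (θ : P → X → X) (ρ : S → Y → Y)
    (hθid : θ 1 = id) (hθcomp : ∀ n m : P, θ n ∘ θ m = θ (m * n))
    (hρid : ρ 1 = id) (hρcomp : ∀ s t : S, ρ s ∘ ρ t = ρ (t * s))
    (hθloc : ∀ m : P, IsLocalHomeomorph (θ m)) (hθsurj : ∀ m : P, Function.Surjective (θ m))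
    (hρloc : ∀ s : S, IsLocalHomeomorph (ρ s)) (hρsurj : ∀ s : S, Function.Surjective (ρ s))
    (hXiso : ∀ x : X, ¬ IsOpen ({x} : Set X)) (hYiso : ∀ y : Y, ¬ IsOpen ({y} : Set Y))
    (hEFX : ∀ m n : P, m ≠ n → interior {x : X | θ m x = θ n x} = ∅)
    (hEFY : ∀ s t : S, s ≠ t → interior {y : Y | ρ s y = ρ t y} = ∅) :
    (∃ φ : X ≃ₜ Y, ∃ a : P → X → S, ∃ b : S → Y → P,
        (∀ m : P, IsLocallyConstant (a m)) ∧ (∀ s : S, IsLocallyConstant (b s)) ∧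
        (∀ (m : P) (x : X), φ (θ m x) = ρ (a m x) (φ x)) ∧
        (∀ (s : S) (y : Y), φ.symm (ρ s y) = θ (b s y) (φ.symm y))) ↔
    (∃ Λ : P × X ≃ₜ S × Y,
        (∀ (m n : P) (x y : X),
          x = θ n y ↔ (Λ (m, x)).2 = ρ (Λ (n, y)).1 (Λ (n, y)).2) ∧
        (∀ (m n : P) (x y : X), x = θ n y →
          Λ (n * m, y) = ((Λ (n, y)).1 * (Λ (m, x)).1, (Λ (n, y)).2))) := by
  constructor
  · rintro ⟨φ, a, b, haLC, hbLC, ha, hb⟩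
    -- continuity of the pieces of Λ
    have hcont1 : Continuous fun p : P × X => a p.1 p.2 := by
      refine IsLocallyConstant.continuous fun s => ?_
      have : (fun p : P × X => a p.1 p.2) ⁻¹' s
          = ⋃ m : P, ({m} : Set P) ×ˢ ((a m) ⁻¹' s) := by
        ext ⟨m, x⟩
        simp [Set.mem_prod]
      rw [this]
      exact isOpen_iUnion fun m => (isOpen_discrete _).prod ((haLC m) s)
    have hcont2 : Continuous fun q : S × Y => b q.1 q.2 := by
      refine IsLocallyConstant.continuous fun s => ?_
      have : (fun q : S × Y => b q.1 q.2) ⁻¹' s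
          = ⋃ t : S, ({t} : Set S) ×ˢ ((b t) ⁻¹' s) := by
        ext ⟨t, y⟩
        simp [Set.mem_prod]
      rw [this]
      exact isOpen_iUnion fun t => (isOpen_discrete _).prod ((hbLC t) s)
    -- the two inverse identities
    have hleft : ∀ (m : P) (x : X), b (a m x) (φ x) = m := by
      intro m x
      obtain ⟨U1, hU1o, hxU1, hU1⟩ := (haLC m).exists_open x
      obtain ⟨U2, hU2o, hxU2, hU2⟩ :=
        ((hbLC (a m x)).comp_continuous φ.continuous).exists_open x
      refine csoe_rigid θ hEFX (hU1o.inter hU2o) ⟨hxU1, hxU2⟩ (s := b (a m x) (φ x)) (t := m)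
        fun x' hx' => ?_
      have e1 : a m x' = a m x := hU1 x' hx'.1
      have e2 : b (a m x) (φ x') = b (a m x) (φ x) := hU2 x' hx'.2
      calc θ (b (a m x) (φ x)) x' = θ (b (a m x) (φ x')) x' := by rw [e2]
        _ = θ (b (a m x) (φ x')) (φ.symm (φ x')) := by rw [φ.symm_apply_apply]
        _ = φ.symm (ρ (a m x) (φ x')) := (hb _ _).symm
        _ = φ.symm (ρ (a m x') (φ x')) := by rw [e1]
        _ = φ.symm (φ (θ m x')) := by rw [ha m x']
        _ = θ m x' := φ.symm_apply_apply _
    have hright : ∀ (s : S) (y : Y), a (b s y) (φ.symm y) = s := by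
      intro s y
      obtain ⟨U1, hU1o, hyU1, hU1⟩ := (hbLC s).exists_open y
      obtain ⟨U2, hU2o, hyU2, hU2⟩ :=
        ((haLC (b s y)).comp_continuous φ.symm.continuous).exists_open y
      refine csoe_rigid ρ hEFY (hU1o.inter hU2o) ⟨hyU1, hyU2⟩ (s := a (b s y) (φ.symm y)) (t := s)
        fun y' hy' => ?_
      have e1 : b s y' = b s y := hU1 y' hy'.1
      have e2 : a (b s y) (φ.symm y') = a (b s y) (φ.symm y) := hU2 y' hy'.2
      calc ρ (a (b s y) (φ.symm y)) y' = ρ (a (b s y) (φ.symm y')) y' := by rw [e2]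
        _ = ρ (a (b s y) (φ.symm y')) (φ (φ.symm y')) := by rw [φ.apply_symm_apply]
        _ = φ (θ (b s y) (φ.symm y')) := (ha _ _).symm
        _ = φ (θ (b s y') (φ.symm y')) := by rw [e1]
        _ = φ (φ.symm (ρ s y')) := by rw [hb s y']
        _ = ρ s y' := φ.apply_symm_apply _
    refine ⟨⟨⟨fun p => (a p.1 p.2, φ p.2), fun q => (b q.1 q.2, φ.symm q.2), ?_, ?_⟩,
        ?_, ?_⟩, ?_, ?_⟩
    · rintro ⟨m, x⟩
      simp only
      rw [φ.symm_apply_apply, hleft]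
    · rintro ⟨s, y⟩
      simp only
      rw [φ.apply_symm_apply, hright]
    · exact hcont1.prodMk (φ.continuous.comp continuous_snd)
    · exact hcont2.prodMk (φ.symm.continuous.comp continuous_snd)
    · intro m n x y
      show x = θ n y ↔ φ x = ρ (a n y) (φ y)
      rw [← ha n y]
      exact ⟨fun h => by rw [h], fun h => φ.injective h⟩
    · intro m n x y hxy
      subst hxy
      show (a (n * m) y, φ y) = (a n y * a m (θ n y), φ y)
      refine Prod.ext ?_ rfl
      obtain ⟨U1, hU1o, hyU1, hU1⟩ := (haLC (n * m)).exists_open y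
      obtain ⟨U2, hU2o, hyU2, hU2⟩ := (haLC n).exists_open y
      obtain ⟨U3, hU3o, hyU3, hU3⟩ :=
        ((haLC m).comp_continuous (hθloc n).continuous).exists_open y
      have hV : IsOpen (φ.symm ⁻¹' (U1 ∩ U2 ∩ U3)) :=
        ((hU1o.inter hU2o).inter hU3o).preimage φ.symm.continuous
      have hyV : φ y ∈ φ.symm ⁻¹' (U1 ∩ U2 ∩ U3) := by
        simp only [Set.mem_preimage, φ.symm_apply_apply]
        exact ⟨⟨hyU1, hyU2⟩, hyU3⟩
      refine csoe_rigid ρ hEFY hV hyV fun y'' hy'' => ?_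
      obtain ⟨⟨h1', h2'⟩, h3'⟩ := hy''
      set y' := φ.symm y'' with hy'def
      have hyy : y'' = φ y' := (φ.apply_symm_apply y'').symm
      rw [hyy]
      calc ρ (a (n * m) y) (φ y') = ρ (a (n * m) y') (φ y') := by rw [hU1 y' h1']
        _ = φ (θ (n * m) y') := (ha _ _).symm
        _ = φ (θ m (θ n y')) := by rw [← hθcomp m n]; rfl
        _ = ρ (a m (θ n y')) (φ (θ n y')) := ha _ _
        _ = ρ (a m (θ n y')) (ρ (a n y') (φ y')) := by rw [ha n y']
        _ = ρ (a n y' * a m (θ n y')) (φ y') :=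
            congrFun (hρcomp (a m (θ n y')) (a n y')) (φ y')
        _ = ρ (a n y * a m (θ n y)) (φ y') := by
            have e3 : a m (θ n y') = a m (θ n y) := hU3 y' h3'
            rw [hU2 y' h2', e3]
  · rintro ⟨Λ, h1, -⟩
    -- the second component of Λ does not depend on the first argument
    have hsnd : ∀ (m : P) (x : X), (Λ (m, x)).2 = (Λ (1, x)).2 := by
      intro m x
      have h := (h1 m 1 x x).mp (by rw [hθid]; rfl)
      have h' := (h1 1 1 x x).mp (by rw [hθid]; rfl)
      exact h.trans h'.symm
    set ψ : X → Y := fun x => (Λ (1, x)).2 with hψ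
    have hψcont : Continuous ψ :=
      continuous_snd.comp (Λ.continuous.comp (continuous_const.prodMk continuous_id))
    have hfix : ∀ x : X, ψ x = ρ ((Λ (1, x)).1) ((Λ (1, x)).2) := fun x =>
      (h1 1 1 x x).mp (by rw [hθid]; rfl)
    have hinj : Function.Injective ψ := by
      intro x x' h
      have : (Λ (1, x)).2 = ρ ((Λ (1, x')).1) ((Λ (1, x')).2) := by
        rw [← hfix x']
        exact h
      have := (h1 1 1 x x').mpr this
      rwa [hθid] at this
    have hsurj : Function.Surjective ψ := by
      intro y
      refine ⟨(Λ.symm (1, y)).2, ?_⟩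
      have : ψ (Λ.symm (1, y)).2 = (Λ ((Λ.symm (1, y)).1, (Λ.symm (1, y)).2)).2 :=
        (hsnd _ _).symm
      rw [this, Prod.mk.eta, Λ.apply_symm_apply]
    set e : X ≃ Y := Equiv.ofBijective ψ ⟨hinj, hsurj⟩ with he
    have hecoe : ∀ x : X, e x = ψ x := fun x => rfl
    set φ : X ≃ₜ Y := Continuous.homeoOfEquivCompactToT2 (f := e) hψcont with hφ
    have hφcoe : ∀ x : X, φ x = ψ x := fun x => rfl
    refine ⟨φ, fun m x => (Λ (m, x)).1, fun s y => (Λ.symm (s, y)).1, ?_, ?_, ?_, ?_⟩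
    · intro m
      rw [IsLocallyConstant.iff_continuous]
      exact continuous_fst.comp (Λ.continuous.comp (continuous_const.prodMk continuous_id))
    · intro s
      rw [IsLocallyConstant.iff_continuous]
      exact continuous_fst.comp (Λ.symm.continuous.comp (continuous_const.prodMk continuous_id))
    · intro m x
      have h := (h1 1 m (θ m x) x).mp rfl
      rw [hφcoe, hφcoe, hψ]
      simpa [← hsnd m x] using h
    · intro s y
      set p := Λ.symm (s, y) with hp
      have hΛp : Λ (p.1, p.2) = (s, y) := by rw [Prod.mk.eta, hp, Λ.apply_symm_apply]
      have hφp2 : φ p.2 = y := by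
        rw [hφcoe, hψ]
        simp only
        rw [← hsnd p.1 p.2, hΛp]
      have hsymm : φ.symm y = p.2 := by
        rw [← hφp2, φ.symm_apply_apply]
      have key : φ.symm (ρ s y) = θ p.1 p.2 := by
        refine (h1 1 p.1 (φ.symm (ρ s y)) p.2).mpr ?_
        rw [hΛp]
        show ψ (φ.symm (ρ s y)) = ρ s y
        rw [← hφcoe, φ.apply_symm_apply]
      rw [key, hsymm]
end

section
/- Let X and Y be connected compact Hausdorff spaces and (X,P,θ), (Y,S,ρ) essentially free semigroup actions that are continuously one-sided orbit equivalent via φ, a, b. Then for each m ∈ P the map x ↦ a(m,x) is constant on X, and α(m) := a(m,x) defines a monoid isomorphism α : P → S satisfying φ(θ_m(x)) = ρ_{α(m)}(φ(x)) for all m, x; that is, the actions are conjugate. -/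
theorem csoe_connected_implies_conjugate
    {X Y P S : Type*} [TopologicalSpace X] [TopologicalSpace Y]
    [CompactSpace X] [T2Space X] [CompactSpace Y] [T2Space Y]
    [Monoid P] [Monoid S]
    (θ : P → X → X) (ρ : S → Y → Y)
    (hθid : θ 1 = id) (hθcomp : ∀ n m : P, θ n ∘ θ m = θ (m * n))
    (hρid : ρ 1 = id) (hρcomp : ∀ s t : S, ρ s ∘ ρ t = ρ (t * s))
    (hθloc : ∀ m : P, IsLocalHomeomorph (θ m)) (hθsurj : ∀ m : P, Function.Surjective (θ m))
    (hρloc : ∀ s : S, IsLocalHomeomorph (ρ s)) (hρsurj : ∀ s : S, Function.Surjective (ρ s))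
    (hEFX : ∀ m n : P, m ≠ n → interior {x : X | θ m x = θ n x} = ∅)
    (hEFY : ∀ s t : S, s ≠ t → interior {y : Y | ρ s y = ρ t y} = ∅)
    (φ : X ≃ₜ Y) (a : P → X → S) (b : S → Y → P)
    (ha : ∀ m : P, IsLocallyConstant (a m)) (hb : ∀ s : S, IsLocallyConstant (b s))
    (haeq : ∀ (m : P) (x : X), φ (θ m x) = ρ (a m x) (φ x))
    (hbeq : ∀ (s : S) (y : Y), φ.symm (ρ s y) = θ (b s y) (φ.symm y))
    [ConnectedSpace X] [ConnectedSpace Y] :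
    (∀ (m : P) (x x' : X), a m x = a m x') ∧
    ∃ α : P ≃* S,
      (∀ (m : P) (x : X), a m x = α m) ∧
      (∀ (m : P) (x : X), φ (θ m x) = ρ (α m) (φ x)) := by
  obtain ⟨x₀⟩ : Nonempty X := inferInstance
  have haconst : ∀ (m : P) (x x' : X), a m x = a m x' := fun m x x' =>
    (ha m).apply_eq_of_preconnectedSpace x x'
  have hbconst : ∀ (s : S) (y y' : Y), b s y = b s y' := fun s y y' =>
    (hb s).apply_eq_of_preconnectedSpace y y'
  -- injectivity from essential freeness
  have injθ : ∀ m n : P, (∀ x, θ m x = θ n x) → m = n := by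
    intro m n h
    by_contra hne
    have hs : {x : X | θ m x = θ n x} = Set.univ := Set.eq_univ_of_forall h
    have := hEFX m n hne
    rw [hs, interior_univ] at this
    exact (Set.univ_nonempty (α := X)).ne_empty this
  have injρ : ∀ s t : S, (∀ y, ρ s y = ρ t y) → s = t := by
    intro s t h
    by_contra hne
    have hs : {y : Y | ρ s y = ρ t y} = Set.univ := Set.eq_univ_of_forall h
    have := hEFY s t hne
    rw [hs, interior_univ] at this
    exact (Set.univ_nonempty (α := Y)).ne_empty this
  set αf : P → S := fun m => a m x₀ with hαf
  set βf : S → P := fun s => b s (φ x₀) with hβf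
  have hα : ∀ (m : P) (x : X), φ (θ m x) = ρ (αf m) (φ x) := by
    intro m x
    rw [haeq m x, haconst m x x₀]
  have hβ : ∀ (s : S) (y : Y), φ.symm (ρ s y) = θ (βf s) (φ.symm y) := by
    intro s y
    rw [hbeq s y, hbconst s y (φ x₀)]
  have hli : Function.LeftInverse βf αf := by
    intro m
    apply injθ
    intro x
    have : φ.symm (ρ (αf m) (φ x)) = θ (βf (αf m)) x := by
      simpa using hβ (αf m) (φ x)
    rw [← this, ← hα m x, Homeomorph.symm_apply_apply]
  have hri : Function.RightInverse βf αf := by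
    intro s
    apply injρ
    intro y
    obtain ⟨x, rfl⟩ := φ.surjective y
    have h1 : φ (θ (βf s) x) = ρ (αf (βf s)) (φ x) := hα (βf s) x
    have h2 : φ.symm (ρ s (φ x)) = θ (βf s) x := by simpa using hβ s (φ x)
    rw [← h2, Homeomorph.apply_symm_apply] at h1
    exact h1.symm
  have hmul : ∀ m n : P, αf (m * n) = αf m * αf n := by
    intro m n
    apply injρ
    intro y
    obtain ⟨x, rfl⟩ := φ.surjective y
    have h1 : φ (θ (m * n) x) = ρ (αf (m * n)) (φ x) := hα (m * n) x
    have h2 : θ n (θ m x) = θ (m * n) x := congrFun (hθcomp n m) x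
    have h3 : φ (θ n (θ m x)) = ρ (αf n) (ρ (αf m) (φ x)) := by
      rw [hα n (θ m x), hα m x]
    have h4 : ρ (αf n) (ρ (αf m) (φ x)) = ρ (αf m * αf n) (φ x) :=
      congrFun (hρcomp (αf n) (αf m)) (φ x)
    rw [h2, h1] at h3
    rw [h3, h4]
  refine ⟨haconst, ⟨⟨⟨αf, βf, hli, hri⟩, hmul⟩, fun m x => haconst m x x₀, fun m x => hα m x⟩⟩
end

section
/- Let (X,P,θ) be an essentially free semigroup action of a submonoid P of a group G on a compact Hausdorff space X, let U be a nonempty open subset of X, let α : U → W be a homeomorphism onto an open set, and let k, l : U → P be locally constant maps with θ_{k(z)}(α(z)) = θ_{l(z)}(z) for all z ∈ U. If k₁, l₁ : U → P are another pair of locally constant maps with θ_{k₁(z)}(α(z)) = θ_{l₁(z)}(z) for all z ∈ U, then k₁(x)·l₁(x)⁻¹ = k(x)·l(x)⁻¹ in G for every x ∈ U. -/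
theorem cocycle_ratio_unique
    {G : Type*} [Group G] (P : Submonoid G)
    {X : Type*} [TopologicalSpace X] [CompactSpace X] [T2Space X]
    (θ : P → X → X)
    (hθid : θ 1 = id) (hθcomp : ∀ n m : P, θ n ∘ θ m = θ (m * n))
    (hθloc : ∀ m : P, IsLocalHomeomorph (θ m)) (hθsurj : ∀ m : P, Function.Surjective (θ m))
    (hrev : ∀ a b : P, ∃ p q : P, (a : G)⁻¹ * (b : G) = (p : G) * (q : G)⁻¹)
    (hEF : ∀ m n : P, m ≠ n → interior {x : X | θ m x = θ n x} = ∅)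
    (U W : Set X) (hU : IsOpen U) (hW : IsOpen W) (hUne : U.Nonempty)
    (α : U ≃ₜ W)
    (k l k₁ l₁ : U → P)
    (hk : IsLocallyConstant k) (hl : IsLocallyConstant l)
    (hk₁ : IsLocallyConstant k₁) (hl₁ : IsLocallyConstant l₁)
    (h : ∀ z : U, θ (k z) ((α z : X)) = θ (l z) (z : X))
    (h₁ : ∀ z : U, θ (k₁ z) ((α z : X)) = θ (l₁ z) (z : X)) :
    ∀ x : U, (k₁ x : G) * (l₁ x : G)⁻¹ = (k x : G) * (l x : G)⁻¹ := by
  intro x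
  obtain ⟨p, q, hpq⟩ := hrev (k x) (k₁ x)
  -- in G : k x * p = k₁ x * q
  have e1 : (k x : G) * p = (k₁ x : G) * q := by
    have : (k₁ x : G) = (k x : G) * ((p : G) * (q : G)⁻¹) := by
      rw [← hpq]; group
    rw [this]; group
  -- hence in P
  have e1P : k x * p = k₁ x * q := by
    apply Subtype.ext
    push_cast
    exact e1
  -- the open set where all four maps take their value at x
  set V : Set U := k ⁻¹' {k x} ∩ l ⁻¹' {l x} ∩ k₁ ⁻¹' {k₁ x} ∩ l₁ ⁻¹' {l₁ x} with hV
  have hVopen : IsOpen V :=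
    (((hk _).inter (hl _)).inter (hk₁ _)).inter (hl₁ _)
  have hxV : x ∈ V := ⟨⟨⟨rfl, rfl⟩, rfl⟩, rfl⟩
  -- on V, θ (l x * p) and θ (l₁ x * q) agree
  have key : ∀ z ∈ V, θ (l x * p) (z : X) = θ (l₁ x * q) (z : X) := by
    rintro z ⟨⟨⟨hkz, hlz⟩, hk₁z⟩, hl₁z⟩
    simp only [Set.mem_preimage, Set.mem_singleton_iff] at hkz hlz hk₁z hl₁z
    have c1 : θ (l x * p) (z : X) = θ (k x * p) ((α z : X)) := by
      rw [← hθcomp p (l x), ← hθcomp p (k x)]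
      simp only [Function.comp_apply]
      rw [← hlz, ← hkz, ← h z]
    have c2 : θ (l₁ x * q) (z : X) = θ (k₁ x * q) ((α z : X)) := by
      rw [← hθcomp q (l₁ x), ← hθcomp q (k₁ x)]
      simp only [Function.comp_apply]
      rw [← hl₁z, ← hk₁z, ← h₁ z]
    rw [c1, c2, e1P]
  -- essential freeness forces l x * p = l₁ x * q
  have e2P : l x * p = l₁ x * q := by
    by_contra hne
    have hint := hEF _ _ hne
    have hSopen : IsOpen ((fun z : U => (z : X)) '' V) :=
      hU.isOpenMap_subtype_val V hVopen
    have hsub : ((fun z : U => (z : X)) '' V) ⊆ {y : X | θ (l x * p) y = θ (l₁ x * q) y} := by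
      rintro y ⟨z, hz, rfl⟩
      exact key z hz
    have : ((x : X)) ∈ interior {y : X | θ (l x * p) y = θ (l₁ x * q) y} :=
      interior_maximal hsub hSopen ⟨x, hxV, rfl⟩
    rw [hint] at this
    exact this
  have e2 : (l x : G) * p = (l₁ x : G) * q := by
    exact_mod_cast congrArg (fun a : P => (a : G)) e2P
  -- conclude in G
  have hk₁' : (k₁ x : G) = (k x : G) * p * (q : G)⁻¹ := by
    rw [e1]; group
  have hl₁' : (l₁ x : G) = (l x : G) * p * (q : G)⁻¹ := by
    rw [e2]; group
  rw [hk₁', hl₁']; group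
end

section
/- Let (X,P,θ) be an essentially free semigroup action of a submonoid P of a group G (with G = P⁻¹P = PP⁻¹) on a compact Hausdorff space X. Suppose m₁, n₁, m₂, n₂ ∈ P and there is a nonempty open set U ⊆ X such that for each x ∈ U there exists y ∈ X with θ_{m₁}(x) = θ_{n₁}(y) and θ_{m₂}(x) = θ_{n₂}(y). Then m₁n₁⁻¹ = m₂n₂⁻¹ in G. -/
theorem group_element_unique
    {G : Type*} [Group G] (P : Submonoid G)
    {X : Type*} [TopologicalSpace X] [CompactSpace X] [T2Space X]
    (θ : P → X → X)
    (hθid : θ 1 = id) (hθcomp : ∀ n m : P, θ n ∘ θ m = θ (m * n))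
    (hθloc : ∀ m : P, IsLocalHomeomorph (θ m)) (hθsurj : ∀ m : P, Function.Surjective (θ m))
    (hrev : ∀ a b : P, ∃ p q : P, (a : G)⁻¹ * (b : G) = (p : G) * (q : G)⁻¹)
    (hEF : ∀ m n : P, m ≠ n → interior {x : X | θ m x = θ n x} = ∅)
    (m₁ n₁ m₂ n₂ : P) (U : Set X) (hU : IsOpen U) (hUne : U.Nonempty)
    (h : ∀ x ∈ U, ∃ y : X, θ m₁ x = θ n₁ y ∧ θ m₂ x = θ n₂ y) :
    (m₁ : G) * (n₁ : G)⁻¹ = (m₂ : G) * (n₂ : G)⁻¹ := by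
  obtain ⟨p, q, hpq⟩ := hrev n₁ n₂
  -- n₁ * p = n₂ * q in G
  have hnpq : (n₁ : G) * p = (n₂ : G) * q := by
    have h1 := congrArg (fun g => (n₁ : G) * g * (q : G)) hpq
    simp only [mul_assoc, inv_mul_cancel_left, inv_mul_cancel, mul_one] at h1
    simpa [mul_assoc] using h1.symm
  have hnpqP : n₁ * p = n₂ * q := Subtype.ext (by push_cast; exact hnpq)
  -- θ (m₁*p) and θ (m₂*q) agree on U
  have hagree : U ⊆ {x : X | θ (m₁ * p) x = θ (m₂ * q) x} := by
    intro x hx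
    obtain ⟨y, hy1, hy2⟩ := h x hx
    have e1 : θ (m₁ * p) x = θ p (θ m₁ x) := by
      rw [← hθcomp p m₁]; rfl
    have e2 : θ (m₂ * q) x = θ q (θ m₂ x) := by
      rw [← hθcomp q m₂]; rfl
    have e3 : θ p (θ n₁ y) = θ (n₁ * p) y := by
      rw [← hθcomp p n₁]; rfl
    have e4 : θ q (θ n₂ y) = θ (n₂ * q) y := by
      rw [← hθcomp q n₂]; rfl
    show θ (m₁ * p) x = θ (m₂ * q) x
    rw [e1, e2, hy1, hy2, e3, e4, hnpqP]
  -- essential freeness forces m₁ * p = m₂ * q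
  have hmpq : m₁ * p = m₂ * q := by
    by_contra hne
    have hint := hEF (m₁ * p) (m₂ * q) hne
    obtain ⟨x, hx⟩ := hUne
    have : x ∈ interior {x : X | θ (m₁ * p) x = θ (m₂ * q) x} :=
      interior_maximal hagree hU hx
    rw [hint] at this
    exact this
  have hmpqG : (m₁ : G) * p = (m₂ : G) * q := by
    have := congrArg (Subtype.val) hmpq
    push_cast at this
    exact this
  calc (m₁ : G) * (n₁ : G)⁻¹ = ((m₁ : G) * p) * ((n₁ : G) * p)⁻¹ := by group
    _ = ((m₂ : G) * q) * ((n₂ : G) * q)⁻¹ := by rw [hmpqG, hnpq]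
    _ = (m₂ : G) * (n₂ : G)⁻¹ := by group
end

section
/- Let P be a submonoid of a group G with G = P⁻¹P = PP⁻¹, acting on the right on a compact Hausdorff space X by homeomorphisms θ_m (m ∈ P) with θ_e = id and θ_n ∘ θ_m = θ_{mn}. For g ∈ G, writing g = m·n⁻¹ with m, n ∈ P, the map θ̃_g := θ_n⁻¹ ∘ θ_m is well-defined: if m₁n₁⁻¹ = m₂n₂⁻¹ with m_i, n_i ∈ P, then θ_{n₁}⁻¹ ∘ θ_{m₁} = θ_{n₂}⁻¹ ∘ θ_{m₂}. -/
theorem extended_action_well_defined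
    {G : Type*} [Group G] (P : Submonoid G)
    {X : Type*} [TopologicalSpace X] [CompactSpace X] [T2Space X]
    (θ : P → X ≃ₜ X)
    (hθid : θ 1 = Homeomorph.refl X)
    (hθcomp : ∀ (n m : P) (x : X), θ n (θ m x) = θ (m * n) x)
    (hrev : ∀ a b : P, ∃ p q : P, (a : G)⁻¹ * (b : G) = (p : G) * (q : G)⁻¹)
    (m₁ n₁ m₂ n₂ : P)
    (hg : (m₁ : G) * (n₁ : G)⁻¹ = (m₂ : G) * (n₂ : G)⁻¹) :
    ∀ x : X, (θ n₁).symm (θ m₁ x) = (θ n₂).symm (θ m₂ x) := by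
  intro x
  obtain ⟨p, q, hpq⟩ := hrev n₁ n₂
  have hn : n₂ * q = n₁ * p := by
    ext
    push_cast
    have : (n₂ : G) = (n₁ : G) * ((p : G) * (q : G)⁻¹) := by
      rw [← hpq]; group
    rw [this]; group
  have hm : m₂ * q = m₁ * p := by
    ext
    push_cast
    have h2 : (m₂ : G) * (q : G) = (m₁ : G) * ((n₁ : G)⁻¹ * (n₂ : G) * (q : G)) := by
      rw [mul_inv_eq_iff_eq_mul.mp hg.symm]; group
    rw [h2, hpq]; group
  set y₁ := (θ n₁).symm (θ m₁ x)
  set y₂ := (θ n₂).symm (θ m₂ x)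
  have h1 : θ n₁ y₁ = θ m₁ x := (θ n₁).apply_symm_apply _
  have h2 : θ n₂ y₂ = θ m₂ x := (θ n₂).apply_symm_apply _
  have key : θ q (θ n₂ y₁) = θ q (θ n₂ y₂) := by
    rw [h2, hθcomp, hθcomp, hn, hm, ← hθcomp, ← hθcomp, h1]
  have := (θ n₂).injective ((θ q).injective key)
  exact this ▸ rfl
end

section
/- Let P be a submonoid of a group G with G = P⁻¹P = PP⁻¹, acting on a space X by homeomorphisms θ_m with θ_e = id and θ_n ∘ θ_m = θ_{mn}. Define θ̃_g = θ_n⁻¹ ∘ θ_m for any decomposition g = mn⁻¹ with m, n ∈ P. Then θ̃ is a right action of G on X: θ̃_{gh} = θ̃_h ∘ θ̃_g for all g, h ∈ G, and θ̃_e = id. -/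
theorem extended_action_is_group_action
    {G : Type*} [Group G] (P : Submonoid G)
    {X : Type*} [TopologicalSpace X] [CompactSpace X] [T2Space X]
    (θ : P → X ≃ₜ X)
    (hθid : θ 1 = Homeomorph.refl X)
    (hθcomp : ∀ (n m : P) (x : X), θ n (θ m x) = θ (m * n) x)
    (hrev : ∀ a b : P, ∃ p q : P, (a : G)⁻¹ * (b : G) = (p : G) * (q : G)⁻¹)
    (hPgen : ∀ g : G, ∃ m n : P, g = (m : G) * (n : G)⁻¹)
    (θt : G → X → X)
    (hθt : ∀ (g : G) (m n : P), g = (m : G) * (n : G)⁻¹ →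
      θt g = fun x => (θ n).symm (θ m x)) :
    θt 1 = id ∧ ∀ g h : G, θt (g * h) = θt h ∘ θt g := by
  constructor
  · have h1 : (1 : G) = ((1 : P) : G) * ((1 : P) : G)⁻¹ := by simp
    rw [hθt 1 1 1 h1]
    funext x
    simp [hθid]
  · intro g h
    obtain ⟨m₁, n₁, hg⟩ := hPgen g
    obtain ⟨m₂, n₂, hh⟩ := hPgen h
    obtain ⟨p, q, hpq⟩ := hrev n₁ m₂
    have hkey : m₂ * q = n₁ * p := by
      ext
      push_cast
      have : (m₂ : G) = (n₁ : G) * ((p : G) * (q : G)⁻¹) := by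
        rw [← hpq]; group
      rw [this]; group
    have hgh : g * h = ((m₁ * p : P) : G) * ((n₂ * q : P) : G)⁻¹ := by
      push_cast
      rw [hg, hh]
      rw [mul_assoc, ← mul_assoc (n₁ : G)⁻¹, hpq]
      group
    rw [hθt (g * h) (m₁ * p) (n₂ * q) hgh, hθt g m₁ n₁ hg, hθt h m₂ n₂ hh]
    funext x
    simp only [Function.comp_apply]
    set y := (θ n₁).symm (θ m₁ x) with hy
    have h1 : θ m₁ x = θ n₁ y := by rw [hy]; simp
    have h2 : (θ (m₁ * p)) x = θ q (θ m₂ y) := by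
      rw [← hθcomp p m₁, h1, hθcomp p n₁, ← hkey, ← hθcomp q m₂]
    rw [h2]
    have h3 : ∀ z : X, (θ (n₂ * q)).symm (θ q z) = (θ n₂).symm z := by
      intro z
      apply (θ (n₂ * q)).injective
      simp only [Homeomorph.apply_symm_apply]
      rw [← hθcomp q n₂]
      simp
    exact h3 _
end

section
/- Let (X,P,θ) be a semigroup action by homeomorphisms of a submonoid P of a group G with G = P⁻¹P = PP⁻¹, and let θ̃ be the extended G-action. Then the map Λ : (x, g, y) ↦ (x, g) is a groupoid isomorphism from the Deaconu–Renault groupoid G(X,P,θ) = {(x,g,y) : ∃ m,n ∈ P, g = mn⁻¹, θ_m(x) = θ_n(y)} onto the transformation groupoid X ⋊_θ̃ G = X × G, with inverse (x,g) ↦ (x, g, θ̃_g(x)). -/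
theorem deaconu_renault_iso_transformation_groupoid
    {G : Type*} [Group G] (P : Submonoid G)
    {X : Type*} [TopologicalSpace X] [CompactSpace X] [T2Space X]
    (θ : P → X ≃ₜ X)
    (hθid : θ 1 = Homeomorph.refl X)
    (hθcomp : ∀ (n m : P) (x : X), θ n (θ m x) = θ (m * n) x)
    (hrev : ∀ a b : P, ∃ p q : P, (a : G)⁻¹ * (b : G) = (p : G) * (q : G)⁻¹)
    (hPgen : ∀ g : G, ∃ m n : P, g = (m : G) * (n : G)⁻¹)
    (θt : G → X → X)
    (hθt : ∀ (g : G) (m n : P), g = (m : G) * (n : G)⁻¹ →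
      θt g = fun x => (θ n).symm (θ m x)) :
    -- (x, g, y) lies in the Deaconu–Renault groupoid iff y = θ̃_g x
    (∀ (x y : X) (g : G),
      (∃ m n : P, g = (m : G) * (n : G)⁻¹ ∧ θ m x = θ n y) ↔ y = θt g x) ∧
    -- Λ : (x, g, y) ↦ (x, g) is a bijection onto X ⋊ G
    Function.Bijective
      (fun t : {t : X × G × X // ∃ m n : P, t.2.1 = (m : G) * (n : G)⁻¹ ∧ θ m t.1 = θ n t.2.2} =>
        ((t : X × G × X).1, (t : X × G × X).2.1)) ∧
    -- Λ intertwines the multiplications: composable triples map to composable pairs,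
    -- and products correspond to products
    (∀ (x y v : X) (g h : G),
      (∃ m n : P, g = (m : G) * (n : G)⁻¹ ∧ θ m x = θ n y) →
      (∃ m n : P, h = (m : G) * (n : G)⁻¹ ∧ θ m y = θ n v) →
      (∃ m n : P, g * h = (m : G) * (n : G)⁻¹ ∧ θ m x = θ n v) ∧ y = θt g x) ∧
    -- Λ intertwines the inversions
    (∀ (x y : X) (g : G),
      (∃ m n : P, g = (m : G) * (n : G)⁻¹ ∧ θ m x = θ n y) →
      ((∃ m n : P, g⁻¹ = (m : G) * (n : G)⁻¹ ∧ θ m y = θ n x) ∧ x = θt g⁻¹ y)) := by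

  have key : ∀ (x y : X) (g : G),
      (∃ m n : P, g = (m : G) * (n : G)⁻¹ ∧ θ m x = θ n y) ↔ y = θt g x := by
    intro x y g
    constructor
    · rintro ⟨m, n, hg, hxy⟩
      rw [hθt g m n hg]
      simp only
      rw [hxy, Homeomorph.symm_apply_apply]
    · rintro rfl
      obtain ⟨m, n, hg⟩ := hPgen g
      refine ⟨m, n, hg, ?_⟩
      rw [hθt g m n hg]
      simp
  have mulkey : ∀ (x y v : X) (g h : G),
      (∃ m n : P, g = (m : G) * (n : G)⁻¹ ∧ θ m x = θ n y) →
      (∃ m n : P, h = (m : G) * (n : G)⁻¹ ∧ θ m y = θ n v) →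
      (∃ m n : P, g * h = (m : G) * (n : G)⁻¹ ∧ θ m x = θ n v) := by
    rintro x y v g h ⟨m, n, hg, h1⟩ ⟨p, q, hh, h2⟩
    obtain ⟨a, b, hab⟩ := hrev n p
    have hpb : (p : G) * b = (n : G) * a := by
      rw [inv_mul_eq_iff_eq_mul] at hab
      rw [hab]; group
    have hPB : p * b = n * a := by
      apply Subtype.coe_injective; push_cast; exact hpb
    refine ⟨m * a, q * b, ?_, ?_⟩
    · have ha : (a : G) = (n : G)⁻¹ * p * b := by rw [mul_assoc, hpb]; group
      push_cast
      rw [hg, hh, ha]; group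
    · calc θ (m * a) x = θ a (θ m x) := (hθcomp a m x).symm
        _ = θ a (θ n y) := by rw [h1]
        _ = θ (n * a) y := hθcomp a n y
        _ = θ (p * b) y := by rw [hPB]
        _ = θ b (θ p y) := (hθcomp b p y).symm
        _ = θ b (θ q v) := by rw [h2]
        _ = θ (q * b) v := hθcomp b q v
  refine ⟨key, ⟨?_, ?_⟩, ?_, ?_⟩
  · rintro ⟨⟨x, g, y⟩, h1⟩ ⟨⟨x', g', y'⟩, h2⟩ heq
    simp only [Prod.mk.injEq] at heq
    obtain ⟨rfl, rfl⟩ := heq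
    have e1 := (key x y g).mp h1
    have e2 := (key x y' g).mp h2
    exact Subtype.ext (by simp [e1, e2])
  · rintro ⟨x, g⟩
    exact ⟨⟨(x, g, θt g x), (key x (θt g x) g).mpr rfl⟩, rfl⟩
  · intro x y v g h hg hh
    exact ⟨mulkey x y v g h hg hh, (key x y g).mp hg⟩
  · rintro x y g ⟨m, n, hg, hxy⟩
    have hginv : g⁻¹ = (n : G) * (m : G)⁻¹ := by rw [hg]; group
    exact ⟨⟨n, m, hginv, hxy.symm⟩, (key y x g⁻¹).mp ⟨n, m, hginv, hxy.symm⟩⟩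
end

section
/- Let (X,P,θ) be a semigroup action by homeomorphisms of a submonoid P of a group G with G = P⁻¹P = PP⁻¹, and θ̃ the extended G-action. Then for x, y ∈ X and m₁, n₁, m₂, n₂ ∈ P with m₁n₁⁻¹ = m₂n₂⁻¹ in G: θ_{m₁}(x) = θ_{n₁}(y) if and only if θ_{m₂}(x) = θ_{n₂}(y). -/
theorem orbit_condition_independent_of_decomposition
    {G : Type*} [Group G] (P : Submonoid G)
    {X : Type*} [TopologicalSpace X] [CompactSpace X] [T2Space X]
    (θ : P → X ≃ₜ X)
    (hθid : θ 1 = Homeomorph.refl X)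
    (hθcomp : ∀ (n m : P) (x : X), θ n (θ m x) = θ (m * n) x)
    (hrev : ∀ a b : P, ∃ p q : P, (a : G)⁻¹ * (b : G) = (p : G) * (q : G)⁻¹)
    (m₁ n₁ m₂ n₂ : P)
    (hg : (m₁ : G) * (n₁ : G)⁻¹ = (m₂ : G) * (n₂ : G)⁻¹) :
    ∀ x y : X, θ m₁ x = θ n₁ y ↔ θ m₂ x = θ n₂ y := by
  have key : ∀ (a₁ b₁ a₂ b₂ : P), (a₁ : G) * (b₁ : G)⁻¹ = (a₂ : G) * (b₂ : G)⁻¹ →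
      ∀ x y : X, θ a₁ x = θ b₁ y → θ a₂ x = θ b₂ y := by
    intro a₁ b₁ a₂ b₂ h x y hx
    obtain ⟨p, q, hpq⟩ := hrev a₁ a₂
    have ha : a₁ * p = a₂ * q := by
      ext
      push_cast
      have : (a₂ : G) = (a₁ : G) * ((p : G) * (q : G)⁻¹) := by
        rw [← hpq]; group
      rw [this]; group
    have hb : b₁ * p = b₂ * q := by
      have h2 : (b₁ : G)⁻¹ * (b₂ : G) = (p : G) * (q : G)⁻¹ := by
        rw [← hpq]
        have : (a₂ : G) = (a₁ : G) * (b₁ : G)⁻¹ * (b₂ : G) := by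
          rw [h]; group
        rw [this]; group
      ext
      push_cast
      have : (b₂ : G) = (b₁ : G) * ((p : G) * (q : G)⁻¹) := by
        rw [← h2]; group
      rw [this]; group
    have : θ q (θ a₂ x) = θ q (θ b₂ y) := by
      rw [hθcomp, hθcomp, ← ha, ← hb, ← hθcomp, ← hθcomp, hx]
    exact (θ q).injective this
  intro x y
  exact ⟨key m₁ n₁ m₂ n₂ hg x y, key m₂ n₂ m₁ n₁ hg.symm x y⟩
end

section
/- A semigroup action by homeomorphisms (X,P,θ) of a submonoid P of a group G (with G = P⁻¹P = PP⁻¹) is essentially free (for all distinct m, n ∈ P the coincidence set {x : θ_m(x) = θ_n(x)} has empty interior) if and only if the extended group action (X,G,θ̃) is topologically free (for every g ≠ e in G, the set {x : θ̃_g(x) ≠ x} is dense in X). -/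
theorem essentially_free_iff_topologically_free
    {G : Type*} [Group G] (P : Submonoid G)
    {X : Type*} [TopologicalSpace X] [CompactSpace X] [T2Space X]
    (θ : P → X ≃ₜ X)
    (hθid : θ 1 = Homeomorph.refl X)
    (hθcomp : ∀ (n m : P) (x : X), θ n (θ m x) = θ (m * n) x)
    (hrev : ∀ a b : P, ∃ p q : P, (a : G)⁻¹ * (b : G) = (p : G) * (q : G)⁻¹)
    (hPgen : ∀ g : G, ∃ m n : P, g = (m : G) * (n : G)⁻¹)
    (θt : G → X → X)
    (hθt : ∀ (g : G) (m n : P), g = (m : G) * (n : G)⁻¹ →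
      θt g = fun x => (θ n).symm (θ m x)) :
    (∀ m n : P, m ≠ n → interior {x : X | θ m x = θ n x} = ∅) ↔
    (∀ g : G, g ≠ 1 → Dense {x : X | θt g x ≠ x}) := by
  have key : ∀ (g : G) (m n : P), g = (m : G) * (n : G)⁻¹ →
      {x : X | θt g x ≠ x} = {x : X | θ m x = θ n x}ᶜ := by
    intro g m n hg
    rw [hθt g m n hg]
    ext x
    constructor
    · intro hx hc
      apply hx
      show (θ n).symm ((θ m) x) = x
      rw [show (θ m) x = (θ n) x from hc]
      simp
    · intro hx hc
      apply hx
      have := congrArg (θ n) hc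
      simpa using this
  constructor
  · intro h g hg
    obtain ⟨m, n, hmn⟩ := hPgen g
    have hne : m ≠ n := by
      rintro rfl
      exact hg (by simp [hmn])
    rw [key g m n hmn]
    exact (interior_eq_empty_iff_dense_compl.mp (h m n hne))
  · intro h m n hmn
    have hg : (m : G) * (n : G)⁻¹ ≠ 1 := by
      intro hone
      exact hmn (Subtype.ext (mul_inv_eq_one.mp hone))
    have hd := h _ hg
    rw [key _ m n rfl] at hd
    exact interior_eq_empty_iff_dense_compl.mpr hd
end

section
/- Let X and Y be one-sided shift spaces of finite type. Then X and Y are continuously orbit equivalent in the sense of Matsumoto–Carlsen (there exist a homeomorphism φ : X → Y and continuous k, l : X → ℕ, k', l' : Y → ℕ with σ_Y^{k(x)}(φ(σ_X(x))) = σ_Y^{l(x)}(φ(x)) and σ_X^{k'(y)}(φ⁻¹(σ_Y(y))) = σ_X^{l'(y)}(φ⁻¹(y))) if and only if the semigroup actions (X, ℕ, n ↦ σ_X^n) and (Y, ℕ, n ↦ σ_Y^n) are continuously orbit equivalent: there exist a homeomorphism φ and continuous maps a₁, b₁ on {(m,n,x,y) : σ_X^m(x) = σ_X^n(y)} into ℕ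 with σ_Y^{a₁(m,n,x,y)}(φ(x)) = σ_Y^{b₁(m,n,x,y)}(φ(y)), and symmetrically a₂, b₂ for Y. -/
private lemma coe_key {X Y : Type*} (σX : X → X) (σY : Y → Y) (φ : X → Y) (k l : X → ℕ)
    (hrel : ∀ x, σY^[k x] (φ (σX x)) = σY^[l x] (φ x)) :
    ∀ (m : ℕ) (x : X),
      σY^[∑ i ∈ Finset.range m, k (σX^[i] x)] (φ (σX^[m] x)) =
      σY^[∑ i ∈ Finset.range m, l (σX^[i] x)] (φ x) := by
  intro m
  induction m with
  | zero => intro x; simp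
  | succ m ih =>
    intro x
    rw [Finset.sum_range_succ, Finset.sum_range_succ]
    calc σY^[(∑ i ∈ Finset.range m, k (σX^[i] x)) + k (σX^[m] x)] (φ (σX^[m + 1] x))
        = σY^[∑ i ∈ Finset.range m, k (σX^[i] x)] (σY^[k (σX^[m] x)] (φ (σX (σX^[m] x)))) := by
          rw [Function.iterate_add_apply, Function.iterate_succ_apply']
      _ = σY^[∑ i ∈ Finset.range m, k (σX^[i] x)] (σY^[l (σX^[m] x)] (φ (σX^[m] x))) := by
          rw [hrel]
      _ = σY^[l (σX^[m] x)] (σY^[∑ i ∈ Finset.range m, k (σX^[i] x)] (φ (σX^[m] x))) := by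
          rw [← Function.iterate_add_apply, add_comm, Function.iterate_add_apply]
      _ = σY^[l (σX^[m] x)] (σY^[∑ i ∈ Finset.range m, l (σX^[i] x)] (φ x)) := by rw [ih]
      _ = σY^[(∑ i ∈ Finset.range m, l (σX^[i] x)) + l (σX^[m] x)] (φ x) := by
          rw [← Function.iterate_add_apply, add_comm]

private lemma coe_pair {X Y : Type*} (σX : X → X) (σY : Y → Y) (φ : X → Y) (k l : X → ℕ)
    (hrel : ∀ x, σY^[k x] (φ (σX x)) = σY^[l x] (φ x))
    (m n : ℕ) (x y : X) (hq : σX^[m] x = σX^[n] y) :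
    σY^[(∑ i ∈ Finset.range n, k (σX^[i] y)) + ∑ i ∈ Finset.range m, l (σX^[i] x)] (φ x) =
    σY^[(∑ i ∈ Finset.range m, k (σX^[i] x)) + ∑ i ∈ Finset.range n, l (σX^[i] y)] (φ y) := by
  calc σY^[(∑ i ∈ Finset.range n, k (σX^[i] y)) + ∑ i ∈ Finset.range m, l (σX^[i] x)] (φ x)
      = σY^[∑ i ∈ Finset.range n, k (σX^[i] y)]
          (σY^[∑ i ∈ Finset.range m, l (σX^[i] x)] (φ x)) := Function.iterate_add_apply ..
    _ = σY^[∑ i ∈ Finset.range n, k (σX^[i] y)]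
          (σY^[∑ i ∈ Finset.range m, k (σX^[i] x)] (φ (σX^[n] y))) := by
        rw [← coe_key σX σY φ k l hrel m x, hq]
    _ = σY^[∑ i ∈ Finset.range m, k (σX^[i] x)]
          (σY^[∑ i ∈ Finset.range n, k (σX^[i] y)] (φ (σX^[n] y))) := by
        rw [← Function.iterate_add_apply, add_comm, Function.iterate_add_apply]
    _ = σY^[∑ i ∈ Finset.range m, k (σX^[i] x)]
          (σY^[∑ i ∈ Finset.range n, l (σX^[i] y)] (φ y)) := by
        rw [coe_key σX σY φ k l hrel n y]
    _ = _ := (Function.iterate_add_apply ..).symm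

private lemma coe_sum_lc {X Y : Type*} [TopologicalSpace X] [TopologicalSpace Y]
    {σX : X → X} (hσX : Continuous σX) {k : X → ℕ} (hk : IsLocallyConstant k)
    (m : ℕ) (f : Y → X) (hf : Continuous f) :
    IsLocallyConstant (fun y => ∑ i ∈ Finset.range m, k (σX^[i] (f y))) := by
  rw [IsLocallyConstant.iff_continuous]
  exact continuous_finset_sum _ fun i _ =>
    hk.continuous.comp ((hσX.iterate i).comp hf)

theorem matsumoto_coe_iff_semigroup_coe
    {A : Type*} [Finite A] [TopologicalSpace A] [DiscreteTopology A]
    (X Y : Set (ℕ → A)) (hXc : IsClosed X) (hYc : IsClosed Y)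
    (hXinv : ∀ x ∈ X, (fun i => x (i + 1)) ∈ X)
    (hYinv : ∀ y ∈ Y, (fun i => y (i + 1)) ∈ Y)
    (σX : X → X) (hσX : ∀ (x : X) (i : ℕ), (σX x : ℕ → A) i = (x : ℕ → A) (i + 1))
    (σY : Y → Y) (hσY : ∀ (y : Y) (i : ℕ), (σY y : ℕ → A) i = (y : ℕ → A) (i + 1))
    (hXft : IsLocalHomeomorph σX) (hXsurj : Function.Surjective σX)
    (hYft : IsLocalHomeomorph σY) (hYsurj : Function.Surjective σY) :
    (∃ φ : X ≃ₜ Y, ∃ k l : X → ℕ, ∃ k' l' : Y → ℕ,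
        IsLocallyConstant k ∧ IsLocallyConstant l ∧
        IsLocallyConstant k' ∧ IsLocallyConstant l' ∧
        (∀ x : X, σY^[k x] (φ (σX x)) = σY^[l x] (φ x)) ∧
        (∀ y : Y, σX^[k' y] (φ.symm (σY y)) = σX^[l' y] (φ.symm y))) ↔
    (∃ φ : X ≃ₜ Y,
      ∃ a₁ b₁ : (m n : ℕ) → {q : X × X // σX^[m] q.1 = σX^[n] q.2} → ℕ,
      ∃ a₂ b₂ : (s t : ℕ) → {q : Y × Y // σY^[s] q.1 = σY^[t] q.2} → ℕ,
        (∀ m n : ℕ, IsLocallyConstant (a₁ m n)) ∧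
        (∀ m n : ℕ, IsLocallyConstant (b₁ m n)) ∧
        (∀ s t : ℕ, IsLocallyConstant (a₂ s t)) ∧
        (∀ s t : ℕ, IsLocallyConstant (b₂ s t)) ∧
        (∀ (m n : ℕ) (q : {q : X × X // σX^[m] q.1 = σX^[n] q.2}),
          σY^[a₁ m n q] (φ q.1.1) = σY^[b₁ m n q] (φ q.1.2)) ∧
        (∀ (s t : ℕ) (q : {q : Y × Y // σY^[s] q.1 = σY^[t] q.2}),
          σX^[a₂ s t q] (φ.symm q.1.1) = σX^[b₂ s t q] (φ.symm q.1.2))) := by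
  have hXcont : Continuous σX := hXft.continuous
  have hYcont : Continuous σY := hYft.continuous
  constructor
  · rintro ⟨φ, k, l, k', l', hk, hl, hk', hl', hrel, hrel'⟩
    refine ⟨φ,
      fun m n q => (∑ i ∈ Finset.range n, k (σX^[i] q.1.2)) +
        ∑ i ∈ Finset.range m, l (σX^[i] q.1.1),
      fun m n q => (∑ i ∈ Finset.range m, k (σX^[i] q.1.1)) +
        ∑ i ∈ Finset.range n, l (σX^[i] q.1.2),
      fun s t q => (∑ i ∈ Finset.range t, k' (σY^[i] q.1.2)) +
        ∑ i ∈ Finset.range s, l' (σY^[i] q.1.1),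
      fun s t q => (∑ i ∈ Finset.range s, k' (σY^[i] q.1.1)) +
        ∑ i ∈ Finset.range t, l' (σY^[i] q.1.2),
      ?_, ?_, ?_, ?_, ?_, ?_⟩
    · intro m n
      rw [IsLocallyConstant.iff_continuous]
      exact ((coe_sum_lc hXcont hk n _ (continuous_snd.comp continuous_subtype_val)).continuous).add
        ((coe_sum_lc hXcont hl m _ (continuous_fst.comp continuous_subtype_val)).continuous)
    · intro m n
      rw [IsLocallyConstant.iff_continuous]
      exact ((coe_sum_lc hXcont hk m _ (continuous_fst.comp continuous_subtype_val)).continuous).add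
        ((coe_sum_lc hXcont hl n _ (continuous_snd.comp continuous_subtype_val)).continuous)
    · intro s t
      rw [IsLocallyConstant.iff_continuous]
      exact ((coe_sum_lc hYcont hk' t _ (continuous_snd.comp continuous_subtype_val)).continuous).add
        ((coe_sum_lc hYcont hl' s _ (continuous_fst.comp continuous_subtype_val)).continuous)
    · intro s t
      rw [IsLocallyConstant.iff_continuous]
      exact ((coe_sum_lc hYcont hk' s _ (continuous_fst.comp continuous_subtype_val)).continuous).add
        ((coe_sum_lc hYcont hl' t _ (continuous_snd.comp continuous_subtype_val)).continuous)
    · intro m n q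
      exact coe_pair σX σY φ k l hrel m n q.1.1 q.1.2 q.2
    · intro s t q
      exact coe_pair σY σX φ.symm k' l' hrel' s t q.1.1 q.1.2 q.2
  · rintro ⟨φ, a₁, b₁, a₂, b₂, ha₁, hb₁, ha₂, hb₂, hr₁, hr₂⟩
    have eX : ∀ x : X, σX^[1] ((x, σX x) : X × X).1 = σX^[0] ((x, σX x) : X × X).2 := by
      intro x; simp
    have eY : ∀ y : Y, σY^[1] ((y, σY y) : Y × Y).1 = σY^[0] ((y, σY y) : Y × Y).2 := by
      intro y; simp
    have gXc : Continuous fun x : X =>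
        (⟨(x, σX x), eX x⟩ : {q : X × X // σX^[1] q.1 = σX^[0] q.2}) :=
      (continuous_id.prodMk hXcont).subtype_mk _
    have gYc : Continuous fun y : Y =>
        (⟨(y, σY y), eY y⟩ : {q : Y × Y // σY^[1] q.1 = σY^[0] q.2}) :=
      (continuous_id.prodMk hYcont).subtype_mk _
    refine ⟨φ,
      fun x => b₁ 1 0 ⟨(x, σX x), eX x⟩, fun x => a₁ 1 0 ⟨(x, σX x), eX x⟩,
      fun y => b₂ 1 0 ⟨(y, σY y), eY y⟩, fun y => a₂ 1 0 ⟨(y, σY y), eY y⟩,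
      (hb₁ 1 0).comp_continuous gXc, (ha₁ 1 0).comp_continuous gXc,
      (hb₂ 1 0).comp_continuous gYc, (ha₂ 1 0).comp_continuous gYc,
      fun x => (hr₁ 1 0 ⟨(x, σX x), eX x⟩).symm,
      fun y => (hr₂ 1 0 ⟨(y, σY y), eY y⟩).symm⟩
end
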